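/- arXiv:0801.4494 — 2 statements merged into one kernel-verified Lean document; each statement's English description precedes it below -/
import Mathlib

section
/- (Theorem 2.) Let n ≥ 1, let a : Fin n → ℝ, and let F : (Fin n → ℝ) → ℝ be such that for every i : Fin n and every x : Fin n → ℝ the function t ↦ F(x[i := t]) is differentiable on ℝ with continuous derivative. For each i : Fin n define fᵢ : (Fin n → ℝ) → ℝ by fᵢ(x) := F(fun j => if j < i then a j else x j) − F(fun j => if j ≤ i then a j else x j). Then: (1) F(x) = (Σ_{i} fᵢ(x)) + F(a) for every x, so F is a linear combination of the fᵢ plus a constant; (2) each fᵢ depends only on the variables x_j with j > i together with x_i; (3) each fᵢ vanishes when x_i = a i, i.e. fᵢ(x[i := a i]) = 0 for all x, hence each fᵢ is a Basic Function of Type One with respect to the i-th variable with basepoint a. -/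
/-- Theorem 2: `F` decomposes as a sum of Basic Functions of Type Two
(plus a constant): with
`fᵢ x := F (fun j => if j < i then a j else x j) − F (fun j => if j ≤ i then a j else x j)`,
(1) `F x = (Σ i, fᵢ x) + F a`; (2) `fᵢ` depends only on the coordinates `x j` for `j ≥ i`;
(3) `fᵢ (x[i := a i]) = 0` for all `x`. -/
theorem decomposition_into_basic_functions (n : ℕ) (hn : 1 ≤ n) (a : Fin n → ℝ)
    (F : (Fin n → ℝ) → ℝ)
    (hdiff : ∀ (i : Fin n) (x : Fin n → ℝ),
      Differentiable ℝ (fun t : ℝ => F (Function.update x i t)))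
    (hcont : ∀ (i : Fin n) (x : Fin n → ℝ),
      Continuous (deriv (fun t : ℝ => F (Function.update x i t))))
    (f : Fin n → (Fin n → ℝ) → ℝ)
    (hf : ∀ (i : Fin n) (x : Fin n → ℝ),
      f i x = F (fun j => if j < i then a j else x j) - F (fun j => if j ≤ i then a j else x j)) :
    (∀ x : Fin n → ℝ, F x = (∑ i : Fin n, f i x) + F a) ∧
    (∀ (i : Fin n) (x y : Fin n → ℝ), (∀ j : Fin n, i ≤ j → x j = y j) → f i x = f i y) ∧
    (∀ (i : Fin n) (x : Fin n → ℝ), f i (Function.update x i (a i)) = 0) := by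
  refine ⟨?_, ?_, ?_⟩
  · intro x
    set g : ℕ → ℝ := fun k => F (fun j => if (j : ℕ) < k then a j else x j) with hg
    have key : ∑ i : Fin n, f i x = ∑ i ∈ Finset.range n, (g i - g (i + 1)) := by
      rw [Finset.sum_range fun i => g i - g (i + 1)]
      refine Finset.sum_congr rfl fun i _ => ?_
      rw [hf]
      have h2 : (fun j : Fin n => if j ≤ i then a j else x j)
          = fun j : Fin n => if (j : ℕ) < (i : ℕ) + 1 then a j else x j := by
        funext j
        by_cases h : (j : ℕ) ≤ (i : ℕ) <;> simp [Fin.le_def, Nat.lt_succ_iff, h]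
      rw [h2]
      rfl
    rw [key, Finset.sum_range_sub']
    have h0 : g 0 = F x := by simp [hg]
    have hn' : g n = F a := by
      simp only [hg]
      congr 1; funext j; simp [j.isLt]
    rw [h0, hn']; ring
  · intro i x y hxy
    rw [hf, hf]
    congr 1
    · congr 1; funext j
      by_cases h : j < i
      · simp [h]
      · simp [h, hxy j (le_of_not_gt h)]
    · congr 1; funext j
      by_cases h : j ≤ i
      · simp [h]
      · simp [h, hxy j (le_of_lt (lt_of_not_ge h))]
  · intro i x
    rw [hf]
    have : (fun j => if j < i then a j else Function.update x i (a i) j)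
        = (fun j => if j ≤ i then a j else Function.update x i (a i) j) := by
      funext j
      rcases lt_trichotomy j i with h | h | h
      · simp [h, h.le]
      · subst h; simp
      · simp [not_lt_of_gt h, not_le_of_gt h]
    rw [this]; ring
end

section
/- (Correctness of the Basic Function Method for a Type-Two decomposition.) Let n ≥ 1 and m ≥ 1, let a : Fin n → ℝ, and for each j : Fin m let B_j : (Fin n → ℝ) → ℝ and S_j ⊆ Fin n (the set of variables on which B_j depends) satisfy: (i) for every i : Fin n and every x, the map t ↦ B_j(x[i := t]) is differentiable on ℝ with continuous derivative; (ii) if i ∈ S_j then B_j(x[i := a i]) = 0 for all x (B_j is Basic of Type One with respect to each of its own variables, hence of Type Two); (iii) if i ∉ S_j then B_j(x[i := t]) = B_j(x) for all x and t (B_j does not depend on x_i). Define φ := Σ_{j} B_j and Mᵢ := ∂ᵢφ. Then for every x : Fin n → ℝ: Σ_{i : Fin n} ∫_{a i}^{x i} Mᵢ(x[i := t]) dt = Σ_{j : Fin m} (card S_j) • B_j(x); that is, integrating each coefficient of the exact differential Σᵢ Mᵢ dxᵢ produces each Basic Function B_j repeated exactly as many times as the number of variables it depends on, so eliminating the repeated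 terms recovers the solution φ(x) = Σ_j B_j(x). -/
/-- Correctness of the Basic Function Method: if `φ = Σ j, B j` where
each `B j` is a Basic Function of Type Two depending exactly on the variables in
`S j`, then integrating each coefficient `Mᵢ = ∂ᵢφ` of the exact differential
produces each `B j` repeated `card (S j)` times:
`Σ i, ∫_{a i}^{x i} Mᵢ(x[i := t]) dt = Σ j, (card (S j)) • B j x`. -/
theorem basic_function_method_correctness (n m : ℕ) (hn : 1 ≤ n) (hm : 1 ≤ m)
    (a : Fin n → ℝ)
    (B : Fin m → (Fin n → ℝ) → ℝ) (S : Fin m → Finset (Fin n))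
    (hdiff : ∀ (j : Fin m) (i : Fin n) (x : Fin n → ℝ),
      Differentiable ℝ (fun t : ℝ => B j (Function.update x i t)))
    (hcont : ∀ (j : Fin m) (i : Fin n) (x : Fin n → ℝ),
      Continuous (deriv (fun t : ℝ => B j (Function.update x i t))))
    (hbasic : ∀ (j : Fin m) (i : Fin n), i ∈ S j →
      ∀ x : Fin n → ℝ, B j (Function.update x i (a i)) = 0)
    (hindep : ∀ (j : Fin m) (i : Fin n), i ∉ S j →
      ∀ (x : Fin n → ℝ) (t : ℝ), B j (Function.update x i t) = B j x)
    (φ : (Fin n → ℝ) → ℝ) (hφ : ∀ x : Fin n → ℝ, φ x = ∑ j : Fin m, B j x)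
    (M : Fin n → (Fin n → ℝ) → ℝ)
    (hM : ∀ (i : Fin n) (x : Fin n → ℝ),
      M i x = deriv (fun t : ℝ => φ (Function.update x i t)) (x i)) :
    ∀ x : Fin n → ℝ,
      (∑ i : Fin n, ∫ t in (a i)..(x i), M i (Function.update x i t))
        = ∑ j : Fin m, (S j).card • B j x := by
  intro x
  have key : ∀ i : Fin n,
      (∫ t in (a i)..(x i), M i (Function.update x i t))
        = ∑ j : Fin m, (if i ∈ S j then B j x else 0) := by
    intro i
    set g : ℝ → ℝ := fun t => φ (Function.update x i t) with hg
    have hgsum : g = fun t => ∑ j, B j (Function.update x i t) := by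
      funext t; simp [hg, hφ]
    have hgdiff : Differentiable ℝ g := by
      rw [hgsum]
      exact Differentiable.fun_sum (fun j _ => hdiff j i x)
    have hderiv : deriv g = fun t => ∑ j, deriv (fun s => B j (Function.update x i s)) t := by
      funext t
      rw [hgsum, deriv_fun_sum (fun j _ => (hdiff j i x).differentiableAt)]
    have hMg : ∀ t : ℝ, M i (Function.update x i t) = deriv g t := by
      intro t
      rw [hM]
      simp only [hg, Function.update_idem, Function.update_self]
    have hcontderiv : Continuous (deriv g) := by
      rw [hderiv]
      exact continuous_finset_sum _ (fun j _ => hcont j i x)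
    have hint : (∫ t in (a i)..(x i), M i (Function.update x i t))
        = ∫ t in (a i)..(x i), deriv g t := by
      congr 1
      funext t
      exact hMg t
    rw [hint, intervalIntegral.integral_deriv_eq_sub
      (fun t _ => hgdiff t)
      (hcontderiv.intervalIntegrable _ _)]
    have hgx : g (x i) = ∑ j, B j x := by
      simp [hg, hφ, Function.update_eq_self]
    have hga : g (a i) = ∑ j, (if i ∈ S j then 0 else B j x) := by
      rw [hg]
      simp only [hφ]
      refine Finset.sum_congr rfl (fun j _ => ?_)
      by_cases h : i ∈ S j
      · simp [h, hbasic j i h x]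
      · simp [h, hindep j i h x (a i)]
    rw [hgx, hga, ← Finset.sum_sub_distrib]
    refine Finset.sum_congr rfl (fun j _ => ?_)
    by_cases h : i ∈ S j <;> simp [h]
  simp only [key]
  rw [Finset.sum_comm]
  refine Finset.sum_congr rfl (fun j _ => ?_)
  simp [Finset.sum_ite_mem, Finset.sum_const]
end
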